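/- Let X be an n×d real matrix with orthonormal columns, Ω a random diagonal matrix with i.i.d. Bernoulli(α) diagonal entries, and set Z = Xᵀ Ω X. Then E‖Z − α I_d‖_F² ≤ d·α(1−α)·s where s = ∑_{i=1}^n ∑_{j=1}^d X_{i,j}⁴. -/

import Mathlib

open Matrix MeasureTheory ProbabilityTheory

/-- Let `X` have orthonormal columns, let `Om(ω)` be a random diagonal matrix
with i.i.d. Bernoulli(α) entries, and `Z(ω) = Xᵀ Om(ω) X`. Then the expected
squared Frobenius norm satisfies `E ∑_{i,j} (Z_{ij} - α δ_{ij})² ≤ d α(1-α) s`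
with `s = ∑_{i,j} X_{ij}⁴`. -/
theorem expected_frobenius_sq_deviation_le {Ω : Type*} [MeasureSpace Ω]
    [IsProbabilityMeasure (ℙ : Measure Ω)]
    (n d : ℕ) (α : ℝ) (hα : α ∈ Set.Ioo (0 : ℝ) 1)
    (X : Matrix (Fin n) (Fin d) ℝ) (hX : Xᵀ * X = 1)
    (v : Fin n → Ω → ℝ) (hmeas : ∀ i, Measurable (v i))
    (hindep : iIndepFun v ℙ)
    (hval : ∀ i ω, v i ω = 0 ∨ v i ω = 1)
    (hp : ∀ i, (ℙ {ω | v i ω = 1} : ENNReal) = ENNReal.ofReal α) :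
    (∫ ω, ∑ i : Fin d, ∑ j : Fin d,
        ((Xᵀ * Matrix.diagonal (fun i' => v i' ω) * X) i j -
          (α • (1 : Matrix (Fin d) (Fin d) ℝ)) i j) ^ 2) ≤
      d * (α * (1 - α)) * ∑ i : Fin n, ∑ j : Fin d, (X i j) ^ 4 := by
  obtain ⟨hα0, hα1⟩ := hα
  set Y : Fin n → Ω → ℝ := fun i ω => v i ω - α with hYdef
  have hmY : ∀ i, Measurable (Y i) := fun i => (hmeas i).sub_const α
  have hbY : ∀ i ω, ‖Y i ω‖ ≤ 1 := by
    intro i ω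
    rcases hval i ω with h | h <;>
      · simp only [hYdef, h, Real.norm_eq_abs, abs_le]
        constructor <;> linarith
  have hbv : ∀ i ω, ‖v i ω‖ ≤ 1 := by
    intro i ω
    rcases hval i ω with h | h <;> simp [h]
  have hintv : ∀ i, Integrable (v i) ℙ := fun i =>
    ⟨(hmeas i).aestronglyMeasurable,
      HasFiniteIntegral.of_bounded (C := 1) (Filter.Eventually.of_forall (hbv i))⟩
  have hintY : ∀ i, Integrable (Y i) ℙ := fun i => (hintv i).sub (integrable_const α)
  have hintYY : ∀ i i', Integrable (fun ω => Y i ω * Y i' ω) ℙ := by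
    intro i i'
    refine ⟨((hmY i).mul (hmY i')).aestronglyMeasurable,
      HasFiniteIntegral.of_bounded (C := 1) (Filter.Eventually.of_forall fun ω => ?_)⟩
    calc ‖Y i ω * Y i' ω‖ = ‖Y i ω‖ * ‖Y i' ω‖ := norm_mul _ _
    _ ≤ 1 * 1 := mul_le_mul (hbY i ω) (hbY i' ω) (norm_nonneg _) zero_le_one
    _ = 1 := one_mul 1
  have hEv : ∀ i, (∫ ω, v i ω) = α := by
    intro i
    have hs : MeasurableSet {ω | v i ω = 1} := hmeas i (measurableSet_singleton 1)
    have hvind : v i = Set.indicator {ω | v i ω = 1} (fun _ => (1 : ℝ)) := by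
      funext ω
      rcases hval i ω with h | h <;> simp [Set.indicator, h]
    rw [show (∫ ω, v i ω) = ∫ ω, Set.indicator {ω | v i ω = 1} (fun _ => (1:ℝ)) ω from by
        rw [← hvind],
      integral_indicator_const _ hs, measureReal_def, hp i, smul_eq_mul, mul_one,
      ENNReal.toReal_ofReal hα0.le]
  have hEY : ∀ i, (∫ ω, Y i ω) = 0 := by
    intro i
    simp only [hYdef]
    rw [integral_sub (hintv i) (integrable_const α), hEv i, integral_const]
    simp
  have hEYY : ∀ i, (∫ ω, Y i ω * Y i ω) = α * (1 - α) := by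
    intro i
    have hpt : ∀ ω, Y i ω * Y i ω = (1 - 2 * α) * v i ω + α ^ 2 := by
      intro ω
      rcases hval i ω with h | h <;> simp [hYdef, h] <;> ring
    simp only [hpt]
    rw [integral_add ((hintv i).const_mul _) (integrable_const _),
      integral_const_mul, hEv i, integral_const]
    simp only [measureReal_def, measure_univ, ENNReal.toReal_one, one_smul]
    ring
  have hcross : ∀ i i', i ≠ i' → (∫ ω, Y i ω * Y i' ω) = 0 := by
    intro i i' hne
    have hind : IndepFun (Y i) (Y i') ℙ :=
      (hindep.indepFun hne).comp (measurable_id.sub_const α) (measurable_id.sub_const α)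
    have := hind.integral_mul_eq_mul_integral (hintY i).aestronglyMeasurable (hintY i').aestronglyMeasurable
    calc (∫ ω, Y i ω * Y i' ω) = ∫ ω, (Y i * Y i') ω := rfl
    _ = (∫ ω, Y i ω) * ∫ ω, Y i' ω := this
    _ = 0 := by rw [hEY i, hEY i']; ring
  -- pointwise identity for matrix entries
  have hpt : ∀ ω (j k : Fin d),
      (Xᵀ * Matrix.diagonal (fun i' => v i' ω) * X) j k -
        (α • (1 : Matrix (Fin d) (Fin d) ℝ)) j k
      = ∑ i : Fin n, Y i ω * (X i j * X i k) := by
    intro ω j k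
    have h1 : (Xᵀ * Matrix.diagonal (fun i' => v i' ω) * X) j k
        = ∑ i : Fin n, v i ω * (X i j * X i k) := by
      rw [Matrix.mul_assoc, Matrix.mul_apply]
      refine Finset.sum_congr rfl fun i _ => ?_
      rw [Matrix.diagonal_mul, Matrix.transpose_apply]
      ring
    have h2 : (α • (1 : Matrix (Fin d) (Fin d) ℝ)) j k
        = α * ∑ i : Fin n, X i j * X i k := by
      rw [← hX, Matrix.smul_apply, Matrix.mul_apply, smul_eq_mul]
      simp [Matrix.transpose_apply]
    rw [h1, h2, Finset.mul_sum, ← Finset.sum_sub_distrib]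
    refine Finset.sum_congr rfl fun i _ => ?_
    simp only [hYdef]; ring
  -- rewrite integrand
  have hintegrand : ∀ ω,
      (∑ j : Fin d, ∑ k : Fin d,
        ((Xᵀ * Matrix.diagonal (fun i' => v i' ω) * X) j k -
          (α • (1 : Matrix (Fin d) (Fin d) ℝ)) j k) ^ 2)
      = ∑ j : Fin d, ∑ k : Fin d, ∑ i : Fin n, ∑ i' : Fin n,
          Y i ω * Y i' ω * ((X i j * X i k) * (X i' j * X i' k)) := by
    intro ω
    refine Finset.sum_congr rfl fun j _ => Finset.sum_congr rfl fun k _ => ?_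
    rw [hpt ω j k, sq, Finset.sum_mul_sum]
    refine Finset.sum_congr rfl fun i _ => Finset.sum_congr rfl fun i' _ => ?_
    ring
  have hterm_int : ∀ (i i' : Fin n) (c : ℝ),
      Integrable (fun ω => Y i ω * Y i' ω * c) ℙ := fun i i' c =>
    (hintYY i i').mul_const c
  have key : (∫ ω, ∑ j : Fin d, ∑ k : Fin d,
        ((Xᵀ * Matrix.diagonal (fun i' => v i' ω) * X) j k -
          (α • (1 : Matrix (Fin d) (Fin d) ℝ)) j k) ^ 2)
      = ∑ j : Fin d, ∑ k : Fin d, ∑ i : Fin n,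
          (α * (1 - α)) * (X i j * X i k) ^ 2 := by
    simp only [hintegrand]
    rw [integral_finset_sum _ fun j _ => integrable_finset_sum _ fun k _ =>
      integrable_finset_sum _ fun i _ => integrable_finset_sum _ fun i' _ =>
        hterm_int i i' _]
    refine Finset.sum_congr rfl fun j _ => ?_
    rw [integral_finset_sum _ fun k _ => integrable_finset_sum _ fun i _ =>
      integrable_finset_sum _ fun i' _ => hterm_int i i' _]
    refine Finset.sum_congr rfl fun k _ => ?_
    rw [integral_finset_sum _ fun i _ => integrable_finset_sum _ fun i' _ =>
      hterm_int i i' _]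
    refine Finset.sum_congr rfl fun i _ => ?_
    rw [integral_finset_sum _ fun i' _ => hterm_int i i' _]
    rw [Finset.sum_eq_single i]
    · rw [integral_mul_const, hEYY i]; ring
    · intro i' _ hne
      rw [integral_mul_const, hcross i i' (Ne.symm hne)]
      exact zero_mul _
    · intro h; exact absurd (Finset.mem_univ i) h
  rw [key]
  have hαα : (0 : ℝ) ≤ α * (1 - α) := mul_nonneg hα0.le (by linarith)
  have hswap : (∑ j : Fin d, ∑ k : Fin d, ∑ i : Fin n,
        (α * (1 - α)) * (X i j * X i k) ^ 2)
      = ∑ i : Fin n, (α * (1 - α)) * (∑ j : Fin d, X i j ^ 2) ^ 2 := by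
    have h1 : ∀ j : Fin d, (∑ k : Fin d, ∑ i : Fin n,
        (α * (1 - α)) * (X i j * X i k) ^ 2)
        = ∑ i : Fin n, ∑ k : Fin d, (α * (1 - α)) * (X i j * X i k) ^ 2 :=
      fun j => Finset.sum_comm
    simp_rw [h1]
    rw [Finset.sum_comm]
    refine Finset.sum_congr rfl fun i _ => ?_
    rw [sq (∑ j : Fin d, X i j ^ 2), Finset.sum_mul_sum, Finset.mul_sum]
    refine Finset.sum_congr rfl fun j _ => ?_
    rw [Finset.mul_sum]
    refine Finset.sum_congr rfl fun k _ => ?_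
    ring
  rw [hswap]
  calc (∑ i : Fin n, (α * (1 - α)) * (∑ j : Fin d, X i j ^ 2) ^ 2)
      ≤ ∑ i : Fin n, (α * (1 - α)) * ((d : ℝ) * ∑ j : Fin d, X i j ^ 4) := by
        refine Finset.sum_le_sum fun i _ => mul_le_mul_of_nonneg_left ?_ hαα
        have h := sq_sum_le_card_mul_sum_sq
          (s := (Finset.univ : Finset (Fin d))) (f := fun j => X i j ^ 2)
        simp only [Finset.card_univ, Fintype.card_fin] at h
        calc ((∑ j : Fin d, X i j ^ 2) ^ 2 : ℝ)
            ≤ (d : ℝ) * ∑ j : Fin d, (X i j ^ 2) ^ 2 := h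
          _ = (d : ℝ) * ∑ j : Fin d, X i j ^ 4 := by
              refine congrArg _ (Finset.sum_congr rfl fun j _ => ?_); ring
    _ = d * (α * (1 - α)) * ∑ i : Fin n, ∑ j : Fin d, (X i j) ^ 4 := by
        rw [Finset.mul_sum]
        refine Finset.sum_congr rfl fun i _ => ?_
        ring
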